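/- arXiv:1510.06219 — 5 statements merged into one kernel-verified Lean document; each statement's English description precedes it below -/
import Mathlib

section
/- Let n ∈ ℕ, let μ be a probability measure on ℝⁿ, let A be a real n×n matrix, and for each t ≥ 0 let κ_t be a Markov kernel from ℝⁿ to ℝⁿ. Assume: (i) reversibility: for every t ≥ 0 and every bounded measurable f : ℝⁿ × ℝⁿ → ℝ, ∫∫ f(x,y) κ_t(x)(dy) μ(dx) = ∫∫ f(y,x) κ_t(x)(dy) μ(dx); (ii) for every t ≥ 0 and μ-a.e. x, each coordinate function y ↦ y_j is integrable with respect to κ_t(x) and ∫ y κ_t(x)(dy) = exp(-tA) x; (iii) the functions x ↦ x_i x_j are μ-integrable with G_{ij} := ∫ x_i x_j μ(dx), and the functions (x,y) ↦ x_i y_j are integrable with respect to the measure μ(dx)κ_t(x)(dy) for each t ≥ 0. Then for every t ≥ 0 the matrix exp(-tA)·G is symmetric, and consequently A·G = G·Aᵀ, i.e. the matrix M := A·G is symmetric. -/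
/-!
Reversibility says that the joint law `μ ⊗ₘ κ_t` of `(x_0, x_t)` is invariant under swapping the
two coordinates, so the cross moments `E[x_0,i x_t,j]` are symmetric in `(i, j)`. Conditioning on
`x_0` and using the linear mean evolution computes that cross moment as `(exp(-tA) G)_{ji}`.
Differentiating the symmetry of `exp(-tA) G` at `t = 0⁺` gives the symmetry of `A G`.
-/

open MeasureTheory ProbabilityTheory Matrix

namespace MeasureTheory

variable {α : Type*} [MeasurableSpace α]

theorem Measure.map_swap_compProd_eq_self_of_reversible (μ : Measure α) [IsFiniteMeasure μ]
    (κ : Kernel α α) [IsMarkovKernel κ]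
    (hrev : ∀ f : α × α → ℝ, Measurable f → (∃ C : ℝ, ∀ p, |f p| ≤ C) →
      ∫ x, (∫ y, f (x, y) ∂(κ x)) ∂μ = ∫ x, (∫ y, f (y, x) ∂(κ x)) ∂μ) :
    (μ ⊗ₘ κ).map Prod.swap = μ ⊗ₘ κ := by
  ext s hs
  have hs' : MeasurableSet (Prod.swap ⁻¹' s) := measurable_swap hs
  have hind : ∀ t : Set (α × α), MeasurableSet t →
      ∫ p, t.indicator 1 p ∂(μ ⊗ₘ κ) = ∫ x, (∫ y, t.indicator 1 (x, y) ∂(κ x)) ∂μ := fun t ht =>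
    Measure.integral_compProd ((integrable_const (1 : ℝ)).indicator ht)
  have hreal : (μ ⊗ₘ κ).real (Prod.swap ⁻¹' s) = (μ ⊗ₘ κ).real s := by
    rw [← integral_indicator_one hs', ← integral_indicator_one hs, hind _ hs', hind _ hs]
    refine (hrev (s.indicator 1) (measurable_one.indicator hs) ⟨1, fun p => ?_⟩).symm
    simpa using norm_indicator_le_norm_self (s := s) (1 : α × α → ℝ) (a := p)
  rw [Measure.map_apply measurable_swap hs]
  exact (ENNReal.toReal_eq_toReal_iff' (measure_ne_top _ _) (measure_ne_top _ _)).1 hreal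

theorem integral_comp_swap_of_map_swap_eq_self {E : Type*} [NormedAddCommGroup E]
    [NormedSpace ℝ E] {ν : Measure (α × α)} (hν : ν.map Prod.swap = ν) (f : α × α → E) :
    ∫ p, f p.swap ∂ν = ∫ p, f p ∂ν := by
  conv_rhs => rw [← hν]
  exact (integral_map_equiv MeasurableEquiv.prodComm f).symm

end MeasureTheory

theorem integral_fst_mul_snd_compProd {ι : Type*} [Fintype ι] (μ : Measure (ι → ℝ)) [SFinite μ]
    (κ : Kernel (ι → ℝ) (ι → ℝ)) [IsSFiniteKernel κ] (B G : Matrix ι ι ℝ)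
    (hmean : ∀ᵐ x ∂μ, ∀ j, ∫ y, y j ∂(κ x) = (B *ᵥ x) j)
    (hGint : ∀ i j, Integrable (fun x => x i * x j) μ)
    (hG : ∀ i j, G i j = ∫ x, x i * x j ∂μ) {i j : ι}
    (hint : Integrable (fun p : (ι → ℝ) × (ι → ℝ) => p.1 i * p.2 j) (μ ⊗ₘ κ)) :
    ∫ p, p.1 i * p.2 j ∂(μ ⊗ₘ κ) = (B * G) j i := by
  have hinner : ∀ᵐ x ∂μ, ∫ y, x i * y j ∂(κ x) = ∑ k, B j k * (x k * x i) := by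
    filter_upwards [hmean] with x hx
    rw [integral_const_mul, hx j, mulVec, dotProduct, Finset.mul_sum]
    exact Finset.sum_congr rfl fun k _ => by ring
  rw [Measure.integral_compProd hint, integral_congr_ae hinner,
    integral_finsetSum _ fun k _ => (hGint k i).const_mul _]
  simp only [integral_const_mul, mul_apply, hG]

theorem Matrix.mul_eq_mul_transpose_of_forall_isSymm_exp_mul {ι : Type*} [Fintype ι]
    [DecidableEq ι] (A G : Matrix ι ι ℝ)
    (h : ∀ t : ℝ, 0 ≤ t → (NormedSpace.exp (-(t • A)) * G).IsSymm) :
    A * G = G * Aᵀ := by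
  let : NormedRing (Matrix ι ι ℝ) := Matrix.linftyOpNormedRing
  let : NormedAlgebra ℝ (Matrix ι ι ℝ) := Matrix.linftyOpNormedAlgebra
  have hG : G.IsSymm := by simpa using h 0 le_rfl
  have hleft : HasDerivAt (fun t : ℝ => NormedSpace.exp (-(t • A)) * G) (-(A * G)) 0 := by
    have := (hasDerivAt_exp_smul_const (𝕂 := ℝ) (-A) 0).mul_const G
    simp only [smul_neg, zero_smul, neg_zero, NormedSpace.exp_zero, one_mul, neg_mul] at this
    exact this
  have hright : HasDerivAt (fun t : ℝ => G * NormedSpace.exp (-(t • Aᵀ))) (-(G * Aᵀ)) 0 := by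
    have := (hasDerivAt_exp_smul_const (𝕂 := ℝ) (-Aᵀ) 0).const_mul G
    simp only [smul_neg, zero_smul, neg_zero, NormedSpace.exp_zero, one_mul, mul_neg] at this
    exact this
  have heq : Set.EqOn (fun t : ℝ => NormedSpace.exp (-(t • A)) * G)
      (fun t => G * NormedSpace.exp (-(t • Aᵀ))) (Set.Ici 0) := fun t ht => by
    dsimp only
    rw [← (h t ht).eq, transpose_mul, hG.eq, ← exp_transpose, transpose_neg, transpose_smul]
  have := (uniqueDiffOn_Ici (0 : ℝ) 0 Set.self_mem_Ici).eq_deriv _ hleft.hasDerivWithinAt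
    (hright.hasDerivWithinAt.congr heq (heq Set.self_mem_Ici))
  exact neg_injective this

/-- **Onsager reciprocity, symmetry part.** Microscopic reversibility of a Markov
process with invariant measure `μ` (covariance matrix `G`) whose conditional means
evolve linearly as `exp(-tA) x` implies that `exp(-tA) * G` is symmetric for all
`t ≥ 0`, and hence that the mobility `M = A * G` is symmetric: `A * G = G * Aᵀ`. -/
theorem onsager_reciprocity_symmetry
    (n : ℕ) (μ : Measure (Fin n → ℝ)) [IsProbabilityMeasure μ]
    (A : Matrix (Fin n) (Fin n) ℝ)
    (κ : ℝ → Kernel (Fin n → ℝ) (Fin n → ℝ))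
    (hκ : ∀ t, 0 ≤ t → IsMarkovKernel (κ t))
    -- (i) reversibility (detailed balance)
    (hrev : ∀ t, 0 ≤ t → ∀ f : (Fin n → ℝ) × (Fin n → ℝ) → ℝ,
      Measurable f → (∃ C : ℝ, ∀ p, |f p| ≤ C) →
      ∫ x, (∫ y, f (x, y) ∂(κ t x)) ∂μ = ∫ x, (∫ y, f (y, x) ∂(κ t x)) ∂μ)
    -- (ii) linear evolution of conditional expectations
    (hmean : ∀ t, 0 ≤ t → ∀ᵐ x ∂μ,
      (∀ j, Integrable (fun y => y j) (κ t x)) ∧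
      (∀ j, ∫ y, y j ∂(κ t x) = (NormedSpace.exp (-(t • A))).mulVec x j))
    -- (iii) integrability and the covariance matrix G
    (G : Matrix (Fin n) (Fin n) ℝ)
    (hGint : ∀ i j, Integrable (fun x => x i * x j) μ)
    (hG : ∀ i j, G i j = ∫ x, x i * x j ∂μ)
    (hcross : ∀ t, 0 ≤ t → ∀ i j,
      Integrable (fun p : (Fin n → ℝ) × (Fin n → ℝ) => p.1 i * p.2 j) (μ ⊗ₘ κ t)) :
    (∀ t, 0 ≤ t → (NormedSpace.exp (-(t • A)) * G).IsSymm) ∧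
      A * G = G * Aᵀ ∧ (A * G).IsSymm := by
  have hsymm : ∀ t : ℝ, 0 ≤ t → (NormedSpace.exp (-(t • A)) * G).IsSymm := by
    intro t ht
    have := hκ t ht
    have hswap := Measure.map_swap_compProd_eq_self_of_reversible μ (κ t) (hrev t ht)
    have hmoment i j := integral_fst_mul_snd_compProd μ (κ t) _ G
      ((hmean t ht).mono fun _ hx => hx.2) hGint hG (hcross t ht i j)
    refine IsSymm.ext fun i j => ?_
    rw [← hmoment, ← hmoment, ← integral_comp_swap_of_map_swap_eq_self hswap]
    simp only [Prod.fst_swap, Prod.snd_swap, mul_comm]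
  have hGsymm : G.IsSymm := IsSymm.ext fun i j => by simp only [hG, mul_comm]
  have hAG := mul_eq_mul_transpose_of_forall_isSymm_exp_mul A G hsymm
  refine ⟨fun t _ => ?_, hAG, ?_⟩
  · -- the `t` of the first conjunct elaborates in `ℕ`
    simpa only [Nat.cast_smul_eq_nsmul] using hsymm t t.cast_nonneg
  · rw [IsSymm, transpose_mul, hGsymm.eq, hAG]
end

section
/- Let A and G be real n×n matrices such that: (i) xᵀAx > 0 for every nonzero x ∈ ℝⁿ; (ii) G is symmetric and positive definite; (iii) the product AG is symmetric. Then AG is symmetric positive definite, i.e. xᵀ(AG)x > 0 for every nonzero x ∈ ℝⁿ. -/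
/-! Every eigenvalue `μ` of the symmetric matrix `A * G` is positive: pairing `A (G v) = μ v`
with `G v` gives `(G v)ᵀ A (G v) = μ · vᵀ G v`, where both quadratic forms are positive. -/

open Matrix

theorem Matrix.pos_of_mul_mulVec_eq_smul {ι : Type*} [Fintype ι] {A G : Matrix ι ι ℝ}
    (hA : ∀ x : ι → ℝ, x ≠ 0 → 0 < x ⬝ᵥ A *ᵥ x) {v : ι → ℝ} {μ : ℝ}
    (hGv : 0 < v ⬝ᵥ G *ᵥ v) (hv : (A * G) *ᵥ v = μ • v) : 0 < μ := by
  have hGv_ne : G *ᵥ v ≠ 0 := fun h => by simp [h] at hGv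
  have hpair : G *ᵥ v ⬝ᵥ A *ᵥ (G *ᵥ v) = μ * (v ⬝ᵥ G *ᵥ v) := by
    rw [mulVec_mulVec, hv, dotProduct_smul, smul_eq_mul, dotProduct_comm]
  exact pos_of_mul_pos_left (hpair ▸ hA _ hGv_ne) hGv.le

/-- **Onsager reciprocity, definiteness part.** If `xᵀAx > 0` for all nonzero `x`,
`G` is symmetric positive definite, and `A * G` is symmetric, then the mobility
`M = A * G` is symmetric positive definite. -/
theorem onsager_mobility_posDef
    (n : ℕ) (A G : Matrix (Fin n) (Fin n) ℝ)
    (hA : ∀ x : Fin n → ℝ, x ≠ 0 → 0 < x ⬝ᵥ A.mulVec x)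
    (hG : G.PosDef)
    (hAG : (A * G).IsSymm) :
    (A * G).PosDef := by
  have hM : (A * G).IsHermitian := isHermitian_iff_isSymm.mpr hAG
  refine hM.posDef_iff_eigenvalues_pos.mpr fun i => ?_
  have hv : ⇑(hM.eigenvectorBasis i) ≠ 0 :=
    (WithLp.ofLp_eq_zero 2).not.mpr (hM.eigenvectorBasis.orthonormal.ne_zero i)
  have hGv := hG.dotProduct_mulVec_pos hv
  rw [star_trivial] at hGv
  exact pos_of_mul_mulVec_eq_smul hA hGv (hM.mulVec_eigenvectorBasis i)
end

section
/- Let L : ℝⁿ × ℝⁿ → ℝ be continuous and let S : ℝⁿ → ℝ be differentiable. Assume that for every T > 0 and every continuously differentiable curve z : [0,T] → ℝⁿ, S(z(0)) - ∫₀ᵀ L(z(t), ż(t)) dt = S(z(T)) - ∫₀ᵀ L(z(t), -ż(t)) dt. Then for every z, s ∈ ℝⁿ, L(z, s) - L(z, -s) = -⟨∇S(z), s⟩. -/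
open scoped RealInnerProductSpace

/-!
Along the straight line `t ↦ z + t • s` the velocity is the constant `s`, so the
reversibility identity says that `T ↦ S (z + T • s) - S z` equals the integral over `[0, T]`
of the continuous function `t ↦ L (z + t • s) (-s) - L (z + t • s) s`. Differentiating at
`T = 0` from the right gives `⟪∇S(z), s⟫ = L(z, -s) - L(z, s)`.
-/

def SatisfiesDetailedBalance {E : Type*} [NormedAddCommGroup E] [NormedSpace ℝ E]
    (L : E → E → ℝ) (S : E → ℝ) : Prop :=
  ∀ T : ℝ, 0 < T → ∀ z : ℝ → E, ContDiff ℝ 1 z →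
    S (z 0) - ∫ t in (0:ℝ)..T, L (z t) (deriv z t) =
      S (z T) - ∫ t in (0:ℝ)..T, L (z t) (-(deriv z t))

theorem HasDerivAt.eq_of_sub_eq_integral_Ici {E : Type*} [NormedAddCommGroup E]
    [NormedSpace ℝ E] [CompleteSpace E] {f g : ℝ → E} {f' : E} {a : ℝ}
    (hf : HasDerivAt f f' a) (hg : Continuous g)
    (h : ∀ T ∈ Set.Ici a, f T - f a = ∫ t in a..T, g t) : f' = g a := by
  have hint : HasDerivAt (fun T => f a + ∫ t in a..T, g t) (g a) a :=
    (intervalIntegral.integral_hasDerivAt_right (hg.intervalIntegrable a a)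
      (hg.stronglyMeasurableAtFilter _ _) hg.continuousAt).const_add (f a)
  have hint' : HasDerivWithinAt f (g a) (Set.Ici a) a :=
    hint.hasDerivWithinAt.congr_of_mem (fun T hT => by rw [← h T hT]; abel)
      Set.self_mem_Ici
  exact (uniqueDiffOn_Ici a a Set.self_mem_Ici).eq_deriv _ hf.hasDerivWithinAt hint'

section DetailedBalance

variable {E : Type*} [NormedAddCommGroup E] [NormedSpace ℝ E]
  {L : E → E → ℝ} {S : E → ℝ}

theorem hasDerivAt_line (z s : E) (t : ℝ) : HasDerivAt (fun t : ℝ => z + t • s) s t := by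
  simpa using ((hasDerivAt_id t).smul_const s).const_add z

theorem SatisfiesDetailedBalance.sub_eq_integral_line (hrev : SatisfiesDetailedBalance L S)
    (hL : Continuous fun p : E × E => L p.1 p.2) (z s : E) {T : ℝ} (hT : 0 ≤ T) :
    S (z + T • s) - S z =
      ∫ t in (0:ℝ)..T, (L (z + t • s) (-s) - L (z + t • s) s) := by
  rcases hT.eq_or_lt with rfl | hT
  · simp
  have hline : ContDiff ℝ 1 fun t : ℝ => z + t • s :=
    contDiff_const.add (contDiff_id.smul contDiff_const)
  have hvel : deriv (fun t : ℝ => z + t • s) = fun _ => s :=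
    funext fun t => (hasDerivAt_line z s t).deriv
  have hLline : ∀ v : E, Continuous fun t : ℝ => L (z + t • s) v := fun v =>
    hL.comp (hline.continuous.prodMk continuous_const)
  have key := hrev T hT _ hline
  simp only [hvel, zero_smul, add_zero] at key
  rw [intervalIntegral.integral_sub ((hLline _).intervalIntegrable 0 T)
    ((hLline _).intervalIntegrable 0 T)]
  linarith

end DetailedBalance

/-- **Time-reversal symmetry of the Lagrangian from reversibility.** If the
finite-time identity `S(z(0)) - ∫₀ᵀ L(z,ż) = S(z(T)) - ∫₀ᵀ L(z,-ż)` holds for every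
`T > 0` and every `C¹` curve `z`, then `L(z,s) - L(z,-s) = -⟨∇S(z), s⟩` pointwise. -/
theorem lagrangian_time_reversal_symmetry
    (n : ℕ) (L : EuclideanSpace ℝ (Fin n) → EuclideanSpace ℝ (Fin n) → ℝ)
    (hL : Continuous fun p : EuclideanSpace ℝ (Fin n) × EuclideanSpace ℝ (Fin n) =>
      L p.1 p.2)
    (S : EuclideanSpace ℝ (Fin n) → ℝ) (hS : Differentiable ℝ S)
    (hrev : ∀ T : ℝ, 0 < T → ∀ z : ℝ → EuclideanSpace ℝ (Fin n), ContDiff ℝ 1 z →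
      S (z 0) - ∫ t in (0:ℝ)..T, L (z t) (deriv z t) =
        S (z T) - ∫ t in (0:ℝ)..T, L (z t) (-(deriv z t))) :
    ∀ z s : EuclideanSpace ℝ (Fin n), L z s - L z (-s) = -⟪gradient S z, s⟫ := by
  intro z s
  have hSline : HasDerivAt (fun T : ℝ => S (z + T • s)) (fderiv ℝ S z s) 0 :=
    (hS z).hasFDerivAt.comp_hasDerivAt_of_eq 0 (hasDerivAt_line z s 0) (by simp)
  have hc : Continuous fun t : ℝ => z + t • s := by fun_prop
  have hg : Continuous fun t : ℝ => L (z + t • s) (-s) - L (z + t • s) s :=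
    (hL.comp (hc.prodMk continuous_const)).sub (hL.comp (hc.prodMk continuous_const))
  have hdir := hSline.eq_of_sub_eq_integral_Ici hg fun T hT => by
    simpa only [zero_smul, add_zero] using
      SatisfiesDetailedBalance.sub_eq_integral_line hrev hL z s hT
  have hgrad : ⟪gradient S z, s⟫ = fderiv ℝ S z s := by simp [gradient]
  rw [hgrad, hdir]
  simp
end

section
/- Let L : ℝⁿ → ℝ be convex with L(s) ≥ 0 for all s and inf_{s ∈ ℝⁿ} L(s) = 0, and let ξ* ∈ ℝⁿ satisfy L(s) - L(-s) = -2⟨ξ*, s⟩ for all s ∈ ℝⁿ. Define Ψ : ℝⁿ → ℝ by Ψ(s) := L(s) + ⟨ξ*, s⟩ - L(0). Then: (i) Ψ is convex; (ii) Ψ is symmetric, i.e. Ψ(s) = Ψ(-s) for all s; (iii) Ψ(0) = 0; (iv) Ψ(s) ≥ 0 for all s, hence min_{s} Ψ(s) = 0. -/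
/-!
The symmetry relation says that `⟨ξ*, s⟩` is half the odd defect `L(-s) - L(s)`, so
`Ψ(s) = (L(s) + L(-s))/2 - L(0)` is the even part of `L`, recentred at the origin. The even
part of a convex function is convex and even, and midpoint convexity between `s` and `-s`
gives `L(0) ≤ (L(s) + L(-s))/2`, i.e. `Ψ ≥ 0 = Ψ(0)`.
-/

section EvenPart

variable {E : Type*} [AddGroup E]

noncomputable def evenPart (L : E → ℝ) (s : E) : ℝ := (L s + L (-s)) / 2

theorem evenPart_neg (L : E → ℝ) (s : E) : evenPart L (-s) = evenPart L s := by
  rw [evenPart, evenPart, neg_neg, add_comm]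

theorem evenPart_zero (L : E → ℝ) : evenPart L 0 = L 0 := by
  rw [evenPart, neg_zero, add_self_div_two]

theorem add_eq_evenPart_of_sub_neg_eq {L ℓ : E → ℝ} (hsym : ∀ s, L s - L (-s) = -(2 * ℓ s))
    (s : E) : L s + ℓ s = evenPart L s := by
  rw [evenPart]
  linarith [hsym s]

end EvenPart

section Convex

variable {E : Type*} [AddCommGroup E] [Module ℝ E] {L : E → ℝ}

theorem ConvexOn.apply_zero_le_evenPart (hL : ConvexOn ℝ Set.univ L) (s : E) :
    L 0 ≤ evenPart L s := by
  have hhalf : (0 : ℝ) ≤ 1 / 2 := one_half_pos.le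
  have hmid := hL.2 (Set.mem_univ s) (Set.mem_univ (-s)) hhalf hhalf (add_halves 1)
  rwa [smul_neg, add_neg_cancel, smul_eq_mul, smul_eq_mul, ← mul_add, one_div_mul_eq_div] at hmid

theorem ConvexOn.evenPart (hL : ConvexOn ℝ Set.univ L) : ConvexOn ℝ Set.univ (evenPart L) := by
  have hneg : ConvexOn ℝ Set.univ fun s => L (-s) := hL.comp_linearMap (-LinearMap.id)
  refine ((hL.add hneg).smul one_half_pos.le).congr fun s _ => ?_
  dsimp only [_root_.evenPart, Pi.add_apply, smul_eq_mul]
  rw [one_div_mul_eq_div]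

end Convex

theorem symmetric_dissipation_potential_construction_general
    (n : ℕ) (L : (Fin n → ℝ) → ℝ) (hconv : ConvexOn ℝ Set.univ L)
    (ξstar : Fin n → ℝ) (hsym : ∀ s, L s - L (-s) = -(2 * (ξstar ⬝ᵥ s)))
    (Ψ : (Fin n → ℝ) → ℝ) (hΨ : ∀ s, Ψ s = L s + ξstar ⬝ᵥ s - L 0) :
    ConvexOn ℝ Set.univ Ψ ∧ (∀ s, Ψ s = Ψ (-s)) ∧ Ψ 0 = 0 ∧
      (∀ s, 0 ≤ Ψ s) ∧ IsLeast (Set.range Ψ) 0 := by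
  have hΨ_eq (s) : Ψ s = evenPart L s - L 0 := by
    rw [hΨ, add_eq_evenPart_of_sub_neg_eq hsym]
  have hzero : Ψ 0 = 0 := by rw [hΨ_eq, evenPart_zero, sub_self]
  have hnonneg (s) : 0 ≤ Ψ s := by
    rw [hΨ_eq]
    exact sub_nonneg.2 (hconv.apply_zero_le_evenPart s)
  have hconvΨ : ConvexOn ℝ Set.univ Ψ := by
    rw [funext hΨ_eq]
    exact hconv.evenPart.sub (concaveOn_const _ convex_univ)
  refine ⟨hconvΨ, fun s => by rw [hΨ_eq, hΨ_eq, evenPart_neg], hzero, hnonneg, ⟨0, hzero⟩, ?_⟩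
  rintro _ ⟨s, rfl⟩
  exact hnonneg s

/-- **Construction of the symmetric dissipation potential.** If `L` is convex,
nonnegative, with `inf L = 0`, and satisfies the time-reversal relation
`L(s) - L(-s) = -2⟨ξ*, s⟩`, then `Ψ(s) := L(s) + ⟨ξ*, s⟩ - L(0)` is convex,
symmetric, vanishes at `0`, and is nonnegative, hence `min Ψ = 0`. -/
theorem symmetric_dissipation_potential_construction
    (n : ℕ) (L : (Fin n → ℝ) → ℝ) (hconv : ConvexOn ℝ Set.univ L)
    (hnonneg : ∀ s, 0 ≤ L s) (hinf : sInf (Set.range L) = 0)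
    (ξstar : Fin n → ℝ) (hsym : ∀ s, L s - L (-s) = -(2 * (ξstar ⬝ᵥ s)))
    (Ψ : (Fin n → ℝ) → ℝ) (hΨ : ∀ s, Ψ s = L s + ξstar ⬝ᵥ s - L 0) :
    ConvexOn ℝ Set.univ Ψ ∧ (∀ s, Ψ s = Ψ (-s)) ∧ Ψ 0 = 0 ∧
      (∀ s, 0 ≤ Ψ s) ∧ IsLeast (Set.range Ψ) 0 :=
  symmetric_dissipation_potential_construction_general n L hconv ξstar hsym Ψ hΨ
end

section
/- Let I, J ∈ ℕ. Let c̄ ∈ ℝᴵ with c̄_i > 0 for all i, let k_j > 0 for j = 1,…,J, and let α_j, β_j ∈ ℕᴵ for j = 1,…,J. For c ∈ ℝᴵ with c_i > 0 for all i, set u_i := c_i/c̄_i, define S(c) := -∑_{i=1}^I c̄_i η(c_i/c̄_i) with η(s) = s·log s - s + 1, and define Ψ*(c, ξ) := ∑_{j=1}^J 2 k_j ( ∏_{i=1}^I u_i^{(α_{ij}+β_{ij})/2} ) ( cosh( ∑_{i=1}^I (α_{ij} - β_{ij}) ξ_i ) - 1 ) for ξ ∈ ℝᴵ. Then for every c with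 all c_i > 0, the gradient of ξ ↦ Ψ*(c, ξ) evaluated at ξ = ½∇S(c) equals ∑_{j=1}^J k_j ( ∏_i u_i^{α_{ij}} - ∏_i u_i^{β_{ij}} ) (β_j - α_j) ∈ ℝᴵ, i.e. the right-hand side of the reaction-rate equation ċ = ∑_j k_j (u^{α_j} - u^{β_j})(β_j - α_j). -/
/-!
With `u = c / c̄` one has `½ ∇S(c) = -½ log u`, and the gradient of `Ψ*(c, ·)` at `ξ` is
`∑ⱼ 2 kⱼ u^{(αⱼ+βⱼ)/2} sinh ⟪αⱼ - βⱼ, ξ⟫ (αⱼ - βⱼ)`. At `ξ = -½ log u` the argument of `sinh`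
is `(y - x)/2` with `x = log u^{αⱼ}`, `y = log u^{βⱼ}`, while `u^{(αⱼ+βⱼ)/2} = exp ((x + y)/2)`,
so `2 exp ((x + y)/2) sinh ((y - x)/2) = e^y - e^x` turns each term into
`kⱼ (u^{βⱼ} - u^{αⱼ}) (αⱼ - βⱼ)`.
-/

open Real

section

variable {ι κ : Type*} [Fintype ι] [Fintype κ]

theorem hasGradientAt_of_hasFDerivAt_of_apply_eq_sum {f : EuclideanSpace ℝ ι → ℝ}
    {L : EuclideanSpace ℝ ι →L[ℝ] ℝ} {g x : EuclideanSpace ℝ ι} (hf : HasFDerivAt f L x)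
    (hL : ∀ v, L v = ∑ i, g i * v i) : HasGradientAt f g x := by
  have hgL : InnerProductSpace.toDual ℝ _ g = L := by
    ext v
    simp [PiLp.inner_apply, hL, mul_comm]
  rwa [hasGradientAt_iff_hasFDerivAt, hgL]

theorem hasDerivAt_mul_relEntropy {a s : ℝ} (ha : a ≠ 0) (hs : s ≠ 0) :
    HasDerivAt (fun s => a * (s / a * log (s / a) - s / a + 1)) (log (s / a)) s := by
  have hdiv : HasDerivAt (fun s => s / a) (1 / a) s := by
    simpa using (hasDerivAt_id s).div_const a
  have h := ((((hasDerivAt_mul_log (div_ne_zero hs ha)).sub (hasDerivAt_id _)).add_const 1).comp s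
    hdiv).const_mul a
  exact h.congr_deriv (by field_simp; ring)

theorem hasGradientAt_neg_sum_mul_relEntropy {cbar : ι → ℝ} (hcbar : ∀ i, cbar i ≠ 0)
    {c : EuclideanSpace ℝ ι} (hc : ∀ i, c i ≠ 0) :
    HasGradientAt
      (fun c : EuclideanSpace ℝ ι =>
        -∑ i, cbar i * (c i / cbar i * log (c i / cbar i) - c i / cbar i + 1))
      (WithLp.toLp 2 fun i => -log (c i / cbar i)) c := by
  have hterm (i : ι) : HasFDerivAt
      (fun c : EuclideanSpace ℝ ι =>
        cbar i * (c i / cbar i * log (c i / cbar i) - c i / cbar i + 1))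
      (log (c i / cbar i) • EuclideanSpace.proj (𝕜 := ℝ) i) c := by
    have h := (hasDerivAt_mul_relEntropy (hcbar i) (hc i)).comp_hasFDerivAt c
      (EuclideanSpace.proj (𝕜 := ℝ) i).hasFDerivAt
    exact h
  refine hasGradientAt_of_hasFDerivAt_of_apply_eq_sum
    (HasFDerivAt.fun_sum fun i _ => hterm i).neg fun v => ?_
  simp

theorem hasGradientAt_sum_mul_cosh_sub_one (a : κ → ℝ) (w : κ → ι → ℝ)
    (ξ : EuclideanSpace ℝ ι) :
    HasGradientAt (fun ξ : EuclideanSpace ℝ ι => ∑ j, a j * (cosh (∑ i, w j i * ξ i) - 1))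
      (WithLp.toLp 2 fun i => ∑ j, a j * sinh (∑ i', w j i' * ξ i') * w j i) ξ := by
  have hterm (j : κ) : HasFDerivAt
      (fun ξ : EuclideanSpace ℝ ι => a j * (cosh (∑ i, w j i * ξ i) - 1))
      ((a j * sinh (∑ i, w j i * ξ i)) • ∑ i, w j i • EuclideanSpace.proj (𝕜 := ℝ) i) ξ := by
    have hlin : HasFDerivAt (fun ξ : EuclideanSpace ℝ ι => ∑ i, w j i * ξ i)
        (∑ i, w j i • EuclideanSpace.proj (𝕜 := ℝ) i) ξ := by
      convert (∑ i, w j i • EuclideanSpace.proj (𝕜 := ℝ) i).hasFDerivAt (x := ξ) using 1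
      ext ξ
      simp
    simpa [smul_smul] using
      (((hasDerivAt_cosh _).comp_hasFDerivAt ξ hlin).sub_const 1).const_mul (a j)
  refine hasGradientAt_of_hasFDerivAt_of_apply_eq_sum
    (HasFDerivAt.fun_sum fun j _ => hterm j) fun v => ?_
  simp only [FunLike.coe_sum, FunLike.coe_smul, Finset.sum_apply,
    Pi.smul_apply, smul_eq_mul, EuclideanSpace.coe_proj, Finset.mul_sum, Finset.sum_mul]
  rw [Finset.sum_comm]
  exact Finset.sum_congr rfl fun i _ => Finset.sum_congr rfl fun j _ => by ring

theorem prod_rpow_eq_exp_sum_mul_log {u : ι → ℝ} (hu : ∀ i, 0 < u i) (t : ι → ℝ) :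
    ∏ i, u i ^ t i = exp (∑ i, t i * log (u i)) := by
  rw [exp_sum]
  exact Finset.prod_congr rfl fun i _ => by rw [rpow_def_of_pos (hu i), mul_comm]

theorem two_mul_exp_mul_sinh (x y : ℝ) :
    2 * exp ((x + y) / 2) * sinh ((y - x) / 2) = exp y - exp x := by
  have hy : exp y = exp ((x + y) / 2) * exp ((y - x) / 2) := by rw [← exp_add]; ring_nf
  have hx : exp x = exp ((x + y) / 2) * exp (-((y - x) / 2)) := by rw [← exp_add]; ring_nf
  rw [sinh_eq, hx, hy]
  ring

theorem two_mul_prod_rpow_mul_sinh {u : ι → ℝ} (hu : ∀ i, 0 < u i) (a b : ι → ℝ) :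
    2 * (∏ i, u i ^ ((a i + b i) / 2)) * sinh (∑ i, (a i - b i) * (1 / 2 * -log (u i))) =
      ∏ i, u i ^ b i - ∏ i, u i ^ a i := by
  simp only [prod_rpow_eq_exp_sum_mul_log hu]
  convert two_mul_exp_mul_sinh (∑ i, a i * log (u i)) (∑ i, b i * log (u i)) using 4 <;>
  · simp only [← Finset.sum_add_distrib, ← Finset.sum_sub_distrib, Finset.sum_div]
    exact Finset.sum_congr rfl fun i _ => by ring

end

theorem reaction_rate_equation_is_generalized_gradient_flow_general
    (I J : ℕ) (cbar : Fin I → ℝ) (hcbar : ∀ i, 0 < cbar i)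
    (k : Fin J → ℝ)
    (α β : Fin J → Fin I → ℕ)
    (η : ℝ → ℝ) (hη : ∀ s, η s = s * Real.log s - s + 1)
    (S : EuclideanSpace ℝ (Fin I) → ℝ)
    (hS : ∀ c, S c = -∑ i, cbar i * η (c i / cbar i))
    (Ψstar : EuclideanSpace ℝ (Fin I) → EuclideanSpace ℝ (Fin I) → ℝ)
    (hΨstar : ∀ c ξ, Ψstar c ξ =
      ∑ j, 2 * k j * (∏ i, (c i / cbar i) ^ (((α j i : ℝ) + (β j i : ℝ)) / 2)) *
        (Real.cosh (∑ i, ((α j i : ℝ) - (β j i : ℝ)) * ξ i) - 1)) :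
    ∀ c : EuclideanSpace ℝ (Fin I), (∀ i, 0 < c i) →
      ∀ i, gradient (fun ξ => Ψstar c ξ) ((1/2 : ℝ) • gradient S c) i =
        ∑ j, k j * ((∏ i', (c i' / cbar i') ^ (α j i' : ℝ)) -
            ∏ i', (c i' / cbar i') ^ (β j i' : ℝ)) * ((β j i : ℝ) - (α j i : ℝ)) := by
  intro c hc i
  have hSeq : S = fun c : EuclideanSpace ℝ (Fin I) =>
      -∑ i, cbar i * (c i / cbar i * log (c i / cbar i) - c i / cbar i + 1) :=
    funext fun c => by simp only [hS, hη]
  have hgradS : gradient S c = WithLp.toLp 2 fun i => -log (c i / cbar i) :=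
    hSeq ▸ (hasGradientAt_neg_sum_mul_relEntropy (fun i => (hcbar i).ne')
      fun i => (hc i).ne').gradient
  rw [funext (hΨstar c), (hasGradientAt_sum_mul_cosh_sub_one _ _ _).gradient, hgradS,
    PiLp.toLp_apply]
  refine Finset.sum_congr rfl fun j _ => ?_
  have hcollapse := two_mul_prod_rpow_mul_sinh (fun i => div_pos (hc i) (hcbar i))
    (fun i => (α j i : ℝ)) (fun i => (β j i : ℝ))
  simp only [PiLp.smul_apply, smul_eq_mul]
  linear_combination (k j * ((α j i : ℝ) - β j i)) * hcollapse

/-- **The reaction-rate equation as a generalized gradient flow.** For a mass-action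
reaction network with detailed-balance equilibrium `c̄`, rate constants `k_j`, and
stoichiometric vectors `α_j, β_j`, with entropy `S(c) = -∑ᵢ c̄ᵢ η(cᵢ/c̄ᵢ)`,
`η(s) = s log s - s + 1`, and cosh-type dual dissipation potential `Ψ*`, the
gradient of `ξ ↦ Ψ*(c,ξ)` at `ξ = ½∇S(c)` equals the right-hand side
`∑ⱼ kⱼ (u^{αⱼ} - u^{βⱼ})(βⱼ - αⱼ)` of the reaction-rate equation. -/
theorem reaction_rate_equation_is_generalized_gradient_flow
    (I J : ℕ) (cbar : Fin I → ℝ) (hcbar : ∀ i, 0 < cbar i)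
    (k : Fin J → ℝ) (hk : ∀ j, 0 < k j)
    (α β : Fin J → Fin I → ℕ)
    (η : ℝ → ℝ) (hη : ∀ s, η s = s * Real.log s - s + 1)
    (S : EuclideanSpace ℝ (Fin I) → ℝ)
    (hS : ∀ c, S c = -∑ i, cbar i * η (c i / cbar i))
    (Ψstar : EuclideanSpace ℝ (Fin I) → EuclideanSpace ℝ (Fin I) → ℝ)
    (hΨstar : ∀ c ξ, Ψstar c ξ =
      ∑ j, 2 * k j * (∏ i, (c i / cbar i) ^ (((α j i : ℝ) + (β j i : ℝ)) / 2)) *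
        (Real.cosh (∑ i, ((α j i : ℝ) - (β j i : ℝ)) * ξ i) - 1)) :
    ∀ c : EuclideanSpace ℝ (Fin I), (∀ i, 0 < c i) →
      ∀ i, gradient (fun ξ => Ψstar c ξ) ((1/2 : ℝ) • gradient S c) i =
        ∑ j, k j * ((∏ i', (c i' / cbar i') ^ (α j i' : ℝ)) -
            ∏ i', (c i' / cbar i') ^ (β j i' : ℝ)) * ((β j i : ℝ) - (α j i : ℝ)) :=
  reaction_rate_equation_is_generalized_gradient_flow_general I J cbar hcbar k α β η hη S hS Ψstar
    hΨstar
end
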